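/- arXiv:2103.13979 — 2 statements merged into one kernel-verified Lean document; each statement's English description precedes it below -/
import Mathlib

section
/- Let n ≥ 3, ε > 0, and define u(r) = sqrt((r - 1 + ε) r^{1-n}) for r > 1. Then u satisfies the radial Schrödinger equation -u''(r) - ((n-1)/r) u'(r) - ((n-1)(n-3)/(4 r²)) u(r) - u(r)/(4(r - 1 + ε)²) = 0 for all r > 1. -/
/-!
Writing `u(r) = r^p w(r)` with `p = (1 - n)/2` and `w(r) = √(r - 1 + ε)` conjugates the radial
operator: `u'' + ((n-1)/r) u' + ((n-1)(n-3)/(4r²)) u = r^p w''`. So the equation reduces to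
`w'' = -w / (4 (r - 1 + ε)²)`, which holds for the square root of any affine function of slope one.
-/

open Filter Topology

/-- `u(r) = sqrt((r - 1 + ε) r^{1-n})`. -/
noncomputable def uRad (n : ℕ) (ε : ℝ) : ℝ → ℝ := fun r =>
  Real.sqrt ((r - 1 + ε) * r ^ ((1 : ℝ) - n))

section RpowMul

variable {w w' : ℝ → ℝ} {w'' p x : ℝ}

theorem hasDerivAt_rpow_mul {d : ℝ} (hx : 0 < x) (hw : HasDerivAt w d x) :
    HasDerivAt (fun y => y ^ p * w y) (p * x ^ (p - 1) * w x + x ^ p * d) x :=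
  (Real.hasDerivAt_rpow_const (Or.inl hx.ne')).mul hw

theorem deriv_deriv_sub_add_of_eventuallyEq_rpow_mul {u : ℝ → ℝ} (hx : 0 < x)
    (hu : u =ᶠ[𝓝 x] fun y => y ^ p * w y) (hw : ∀ᶠ y in 𝓝 x, HasDerivAt w (w' y) y)
    (hw' : HasDerivAt w' w'' x) :
    deriv (deriv u) x - 2 * p / x * deriv u x + p * (p + 1) / x ^ 2 * u x = x ^ p * w'' := by
  have hderiv : deriv u =ᶠ[𝓝 x] fun y => p * (y ^ (p - 1) * w y) + y ^ p * w' y := by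
    filter_upwards [hu.eventuallyEq_nhds, hw, lt_mem_nhds hx] with y huy hwy hy
    rw [((hasDerivAt_rpow_mul hy hwy).congr_of_eventuallyEq huy).deriv, mul_assoc]
  have hderiv2 : HasDerivAt (deriv u)
      (p * ((p - 1) * x ^ (p - 1 - 1) * w x + x ^ (p - 1) * w' x)
        + (p * x ^ (p - 1) * w' x + x ^ p * w'')) x :=
    (((hasDerivAt_rpow_mul hx hw.self_of_nhds).const_mul p).add
      (hasDerivAt_rpow_mul hx hw')).congr_of_eventuallyEq hderiv
  have hpow1 : x ^ (p - 1) = x ^ p / x := by rw [Real.rpow_sub hx, Real.rpow_one]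
  have hpow2 : x ^ (p - 1 - 1) = x ^ p / x ^ 2 := by
    rw [Real.rpow_sub hx, hpow1, Real.rpow_one]
    ring
  simp only [hderiv2.deriv, hderiv.self_of_nhds, hu.self_of_nhds, hpow2, hpow1]
  field_simp
  ring

end RpowMul

section SqrtShift

variable {c x : ℝ}

theorem hasDerivAt_sqrt_add_const (hx : 0 < x + c) :
    HasDerivAt (fun y => √(y + c)) (1 / (2 * √(x + c))) x := by
  simpa using ((hasDerivAt_id x).add_const c).sqrt hx.ne'

theorem hasDerivAt_inv_two_mul_sqrt_add_const (hx : 0 < x + c) :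
    HasDerivAt (fun y => 1 / (2 * √(y + c))) (-√(x + c) / (4 * (x + c) ^ 2)) x := by
  have hs : 0 < √(x + c) := Real.sqrt_pos.mpr hx
  simp only [one_div]
  refine (((hasDerivAt_sqrt_add_const hx).const_mul 2).inv (by positivity)).congr_deriv ?_
  have hsq : √(x + c) ^ 2 = x + c := Real.sq_sqrt hx.le
  field_simp
  rw [show √(x + c) ^ 4 = (√(x + c) ^ 2) ^ 2 by ring, hsq]
  ring

end SqrtShift

theorem uRad_eq_rpow_mul_sqrt (n : ℕ) (ε : ℝ) {r : ℝ} (hr : 0 < r) :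
    uRad n ε r = r ^ ((1 - n : ℝ) / 2) * √(r + (ε - 1)) := by
  rw [uRad, Real.sqrt_mul' _ (Real.rpow_nonneg hr.le _), Real.sqrt_eq_rpow (r ^ _),
    ← Real.rpow_mul hr.le, mul_comm]
  ring_nf

theorem stmt11_general (n : ℕ) (ε : ℝ) (hε : 0 < ε) :
    ∀ r : ℝ, 1 < r →
      -(deriv (deriv (uRad n ε)) r) - (((n : ℝ) - 1) / r) * deriv (uRad n ε) r
        - (((n : ℝ) - 1) * ((n : ℝ) - 3) / (4 * r ^ 2)) * uRad n ε r
        - uRad n ε r / (4 * (r - 1 + ε) ^ 2) = 0 := by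
  intro r hr
  have hr0 : 0 < r := one_pos.trans hr
  have hq : 0 < r + (ε - 1) := by linarith
  have hu : uRad n ε =ᶠ[𝓝 r] fun y => y ^ ((1 - n : ℝ) / 2) * √(y + (ε - 1)) := by
    filter_upwards [lt_mem_nhds hr0] with y hy using uRad_eq_rpow_mul_sqrt n ε hy
  have hw : ∀ᶠ y in 𝓝 r, HasDerivAt (fun y => √(y + (ε - 1))) (1 / (2 * √(y + (ε - 1)))) y := by
    filter_upwards [lt_mem_nhds (show 1 - ε < r by linarith)] with y hy
    exact hasDerivAt_sqrt_add_const (by linarith)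
  have hconj := deriv_deriv_sub_add_of_eventuallyEq_rpow_mul hr0 hu hw
    (hasDerivAt_inv_two_mul_sqrt_add_const hq)
  rw [uRad_eq_rpow_mul_sqrt n ε hr0] at hconj ⊢
  linear_combination -hconj

theorem stmt11 (n : ℕ) (hn : 3 ≤ n) (ε : ℝ) (hε : 0 < ε) :
    ∀ r : ℝ, 1 < r →
      -(deriv (deriv (uRad n ε)) r) - (((n : ℝ) - 1) / r) * deriv (uRad n ε) r
        - (((n : ℝ) - 1) * ((n : ℝ) - 3) / (4 * r ^ 2)) * uRad n ε r
        - uRad n ε r / (4 * (r - 1 + ε) ^ 2) = 0 :=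
  stmt11_general n ε hε
end

section
/- Let n ≥ 3, γ ≥ 0, ε_γ = 1/(n - 1 + 2γ), v(r) = sqrt((r - 1 + ε_γ) r^{1-n}) and w(r) = v(r) · log(r - 1 + ε_γ) for r > 1. Then w also satisfies -w'' - ((n-1)/r) w' - ((n-1)(n-3)/(4r²)) w - w/(4(r-1+ε_γ)²) = 0 on (1, ∞), and v(r)/w(r) → 0 as r → ∞. -/
noncomputable def vRad (n : ℕ) (ε : ℝ) : ℝ → ℝ := fun r =>
  Real.sqrt ((r - 1 + ε) * r ^ ((1 : ℝ) - n))

noncomputable def wRad (n : ℕ) (ε : ℝ) : ℝ → ℝ := fun r =>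
  vRad n ε r * Real.log (r - 1 + ε)

/-! With `s = r - 1 + ε` and `a = v'/v = 1/(2s) - (n-1)/(2r)` one has `w' = v (a log s + 1/s)` and
`w'' = v ((a² + a') log s + 2a/s - 1/s²)`. After substitution the equation becomes a rational
identity in `r` and `s` as independent variables, so it holds wherever `r > 0` and `s > 0`, whatever
`ε` is. Finally `v / w = 1 / log s → 0`. -/

open Real Filter Topology

section Radial

variable {n : ℕ} {ε r : ℝ}

-- `vRad n ε r = (r - 1 + ε)^(1/2) r^((1 - n)/2)`, so this is its logarithmic derivative.
noncomputable def vRadLogDeriv (n : ℕ) (ε : ℝ) (r : ℝ) : ℝ :=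
  1 / (2 * (r - 1 + ε)) - ((n : ℝ) - 1) / (2 * r)

theorem hasDerivAt_vRad (hr : 0 < r) (hs : 0 < r - 1 + ε) :
    HasDerivAt (vRad n ε) (vRad n ε r * vRadLogDeriv n ε r) r := by
  have hp : 0 < r ^ ((1 : ℝ) - n) := rpow_pos_of_pos hr _
  have hf : HasDerivAt (fun x => (x - 1 + ε) * x ^ ((1 : ℝ) - n))
      (1 * r ^ ((1 : ℝ) - n) + (r - 1 + ε) * ((1 - n) * r ^ ((1 : ℝ) - n - 1))) r :=
    (((hasDerivAt_id r).sub_const 1).add_const ε).mul (hasDerivAt_rpow_const (Or.inl hr.ne'))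
  have hv : 0 < vRad n ε r := sqrt_pos.2 (mul_pos hs hp)
  have hv2 : vRad n ε r ^ 2 = (r - 1 + ε) * r ^ ((1 : ℝ) - n) := sq_sqrt (mul_pos hs hp).le
  refine (hf.sqrt (mul_pos hs hp).ne').congr_deriv ?_
  change _ / (2 * vRad n ε r) = _
  rw [rpow_sub_one hr.ne', vRadLogDeriv]
  field_simp
  rw [hv2]
  ring

theorem hasDerivAt_vRadLogDeriv (hr : 0 < r) (hs : 0 < r - 1 + ε) :
    HasDerivAt (vRadLogDeriv n ε)
      (-1 / (2 * (r - 1 + ε) ^ 2) + ((n : ℝ) - 1) / (2 * r ^ 2)) r := by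
  have hs' : HasDerivAt (fun x => 2 * (x - 1 + ε)) (2 * 1) r :=
    (((hasDerivAt_id r).sub_const 1).add_const ε).const_mul 2
  refine (((hasDerivAt_const r (1 : ℝ)).div hs' (by positivity)).sub
    ((hasDerivAt_const r ((n : ℝ) - 1)).div ((hasDerivAt_id r).const_mul 2)
      (by positivity))).congr_deriv ?_
  simp only [id]
  field_simp
  ring

theorem hasDerivAt_wRad (hr : 0 < r) (hs : 0 < r - 1 + ε) :
    HasDerivAt (wRad n ε)
      (vRad n ε r * (vRadLogDeriv n ε r * log (r - 1 + ε) + 1 / (r - 1 + ε))) r := by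
  have hlog : HasDerivAt (fun x => log (x - 1 + ε)) (1 / (r - 1 + ε)) r := by
    simpa using (((hasDerivAt_id r).sub_const 1).add_const ε).log hs.ne'
  exact ((hasDerivAt_vRad hr hs).mul hlog).congr_deriv (by ring)

theorem deriv_wRad_eventuallyEq (hr : 0 < r) (hs : 0 < r - 1 + ε) :
    deriv (wRad n ε) =ᶠ[𝓝 r]
      fun x => vRad n ε x * (vRadLogDeriv n ε x * log (x - 1 + ε) + 1 / (x - 1 + ε)) := by
  filter_upwards [eventually_gt_nhds hr, eventually_gt_nhds (by linarith : 1 - ε < r)]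
    with x hx hxε
  exact (hasDerivAt_wRad hx (by linarith)).deriv

theorem hasDerivAt_deriv_wRad (hr : 0 < r) (hs : 0 < r - 1 + ε) :
    HasDerivAt (deriv (wRad n ε))
      (vRad n ε r * ((vRadLogDeriv n ε r ^ 2 - 1 / (2 * (r - 1 + ε) ^ 2)
          + ((n : ℝ) - 1) / (2 * r ^ 2)) * log (r - 1 + ε)
        + 2 * vRadLogDeriv n ε r / (r - 1 + ε) - 1 / (r - 1 + ε) ^ 2)) r := by
  have hs' : HasDerivAt (fun x => x - 1 + ε) 1 r := ((hasDerivAt_id r).sub_const 1).add_const ε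
  have hlog : HasDerivAt (fun x => log (x - 1 + ε)) (1 / (r - 1 + ε)) r := by
    simpa using hs'.log hs.ne'
  have hinv : HasDerivAt (fun x => 1 / (x - 1 + ε)) (-1 / (r - 1 + ε) ^ 2) r := by
    simpa using hs'.fun_inv hs.ne'
  refine (((hasDerivAt_vRad hr hs).fun_mul
      (((hasDerivAt_vRadLogDeriv hr hs).fun_mul hlog).fun_add hinv))
    |>.congr_of_eventuallyEq (deriv_wRad_eventuallyEq hr hs)).congr_deriv ?_
  field_simp
  ring

theorem wRad_ode (hr : 0 < r) (hs : 0 < r - 1 + ε) :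
    -(deriv (deriv (wRad n ε)) r) - (((n : ℝ) - 1) / r) * deriv (wRad n ε) r
      - (((n : ℝ) - 1) * ((n : ℝ) - 3) / (4 * r ^ 2)) * wRad n ε r
      - wRad n ε r / (4 * (r - 1 + ε) ^ 2) = 0 := by
  rw [(hasDerivAt_deriv_wRad hr hs).deriv, (hasDerivAt_wRad hr hs).deriv, wRad, vRadLogDeriv]
  field_simp
  ring

theorem tendsto_vRad_div_wRad (n : ℕ) (ε : ℝ) :
    Tendsto (fun r => vRad n ε r / wRad n ε r) atTop (𝓝 0) := by
  have hlog : Tendsto (fun r => log (r - 1 + ε)) atTop atTop :=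
    tendsto_log_atTop.comp <| tendsto_atTop_add_const_right _ _ <|
      tendsto_atTop_add_const_right _ _ tendsto_id
  refine hlog.inv_tendsto_atTop.congr' ?_
  filter_upwards [eventually_gt_atTop 0, eventually_gt_atTop (1 - ε)] with r hr hrε
  have hv : 0 < vRad n ε r := sqrt_pos.2 (mul_pos (by linarith) (rpow_pos_of_pos hr _))
  simp only [Pi.inv_apply, wRad, div_mul_eq_div_div, div_self hv.ne', one_div]

end Radial

theorem stmt13 (n : ℕ) (hn : 3 ≤ n) (γ : ℝ) (hγ : 0 ≤ γ) :
    (∀ r : ℝ, 1 < r →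
      -(deriv (deriv (wRad n ((n : ℝ) - 1 + 2 * γ)⁻¹)) r)
        - (((n : ℝ) - 1) / r) * deriv (wRad n ((n : ℝ) - 1 + 2 * γ)⁻¹) r
        - (((n : ℝ) - 1) * ((n : ℝ) - 3) / (4 * r ^ 2)) * wRad n ((n : ℝ) - 1 + 2 * γ)⁻¹ r
        - wRad n ((n : ℝ) - 1 + 2 * γ)⁻¹ r / (4 * (r - 1 + ((n : ℝ) - 1 + 2 * γ)⁻¹) ^ 2) = 0) ∧
    Filter.Tendsto
      (fun r : ℝ => vRad n ((n : ℝ) - 1 + 2 * γ)⁻¹ r / wRad n ((n : ℝ) - 1 + 2 * γ)⁻¹ r)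
      Filter.atTop (nhds 0) := by
  have hε : 0 ≤ ((n : ℝ) - 1 + 2 * γ)⁻¹ := by
    have : (3 : ℝ) ≤ n := by exact_mod_cast hn
    exact inv_nonneg.2 (by linarith)
  exact ⟨fun r hr => wRad_ode (by linarith) (by linarith), tendsto_vRad_div_wRad _ _⟩
end
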